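/- There exists N₀ such that for all N ≥ N₀ and all integers i with 1 ≤ i ≤ N−1, the threshold sequence satisfies 0 ≤ t_i^{(N)} ≤ √(2/3)·i. -/
import Mathlib


open Filter Real

/-- Auxiliary backwards recurrence: `tAux N n` equals `t_{N-1-n}^{(N)}`, where
`t_{N-1} = N/2` and `t_{i-1} = (s_i²(s_i+1) + 2(i² − s_i²) t_i) / (2 i (i+1))`
with `s_i = ⌊t_i⌋`. -/
noncomputable def tAux (N : ℕ) : ℕ → ℝ
  | 0 => (N : ℝ) / 2
  | n + 1 =>
      let i : ℝ := (N : ℝ) - 1 - (n : ℝ)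
      let t : ℝ := tAux N n
      let s : ℝ := (⌊t⌋ : ℝ)
      (s ^ 2 * (s + 1) + 2 * (i ^ 2 - s ^ 2) * t) / (2 * i * (i + 1))

/-- The equilibrium threshold sequence `t_i^{(N)}` of the two-sided secretary game,
for `0 ≤ i ≤ N-1`. -/
noncomputable def tgame (N i : ℕ) : ℝ := tAux N (N - 1 - i)

lemma tAux_succ (N n : ℕ) : tAux N (n+1) =
    ((⌊tAux N n⌋:ℝ) ^ 2 * ((⌊tAux N n⌋:ℝ) + 1)
      + 2 * (((N:ℝ) - 1 - n) ^ 2 - (⌊tAux N n⌋:ℝ) ^ 2) * tAux N n)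
    / (2 * ((N:ℝ) - 1 - n) * (((N:ℝ) - 1 - n) + 1)) := rfl

lemma step_basic (i t : ℝ) (hi : 1 ≤ i) (ht0 : 0 ≤ t) (ht : t ≤ (i+1)/2) :
    0 ≤ ((⌊t⌋:ℝ) ^ 2 * ((⌊t⌋:ℝ) + 1) + 2 * (i ^ 2 - (⌊t⌋:ℝ) ^ 2) * t) / (2 * i * (i + 1)) ∧
    ((⌊t⌋:ℝ) ^ 2 * ((⌊t⌋:ℝ) + 1) + 2 * (i ^ 2 - (⌊t⌋:ℝ) ^ 2) * t) / (2 * i * (i + 1))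
      ≤ i * t / (i + 1) := by
  have hs0 : (0:ℝ) ≤ (⌊t⌋:ℝ) := by exact_mod_cast Int.floor_nonneg.mpr ht0
  set s : ℝ := (⌊t⌋:ℝ) with hsdef
  have hs : s ≤ t := Int.floor_le t
  have hti : t ≤ i := by linarith
  have hsi : s ≤ i := le_trans hs hti
  have hden : (0:ℝ) < 2 * i * (i + 1) := by nlinarith
  have hkey : s ^ 2 * (s + 1) + 2 * (i ^ 2 - s ^ 2) * t ≤ 2 * i ^ 2 * t := by
    rcases eq_or_lt_of_le (Int.floor_nonneg.mpr ht0) with h | h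
    · have : s = 0 := by rw [hsdef, ← h]; norm_num
      rw [this]; ring_nf; nlinarith
    · have h1 : (1:ℝ) ≤ s := by
        rw [hsdef]; exact_mod_cast h
      nlinarith [sq_nonneg s]
  constructor
  · apply div_nonneg _ (le_of_lt hden)
    have h1 : 0 ≤ s^2*(s+1) := mul_nonneg (sq_nonneg s) (by linarith)
    have h2 : 0 ≤ 2*(i^2 - s^2)*t := by
      have : s^2 ≤ i^2 := by nlinarith
      have := mul_nonneg (sub_nonneg.2 this) ht0
      linarith
    linarith
  · rw [div_le_iff₀ hden]
    have h2 : i * t / (i + 1) * (2 * i * (i + 1)) = 2 * i ^ 2 * t := by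
      field_simp
    rw [h2]; exact hkey

lemma step_cubic (i t : ℝ) (hi : 1 ≤ i) (ht1 : 1 ≤ t) (ht : t ≤ (i+1)/2) :
    ((⌊t⌋:ℝ) ^ 2 * ((⌊t⌋:ℝ) + 1) + 2 * (i ^ 2 - (⌊t⌋:ℝ) ^ 2) * t) / (2 * i * (i + 1))
      ≤ (2 * i ^ 2 * t - (t-1)^3) / (2 * i * (i + 1)) := by
  set s : ℝ := (⌊t⌋:ℝ)
  have hs : s ≤ t := Int.floor_le t
  have hs1 : t - 1 ≤ s := by
    have h := Int.lt_floor_add_one t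
    have : t < s + 1 := h
    linarith
  have hden : (0:ℝ) < 2 * i * (i + 1) := by nlinarith
  rw [div_le_div_iff_of_pos_right hden]
  nlinarith [sq_nonneg (s - (t-1)), mul_nonneg (sub_nonneg.2 hs1) (sub_nonneg.2 (show (1:ℝ) ≤ t from ht1)),
    mul_nonneg (mul_nonneg (sub_nonneg.2 hs1) (sub_nonneg.2 hs1)) (sub_nonneg.2 ht1),
    mul_nonneg (mul_nonneg (sub_nonneg.2 hs1) (sub_nonneg.2 ht1)) (sub_nonneg.2 ht1),
    mul_nonneg (mul_nonneg (sub_nonneg.2 hs) (sub_nonneg.2 ht1)) (sub_nonneg.2 ht1),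
    mul_nonneg (mul_nonneg (sub_nonneg.2 hs) (sub_nonneg.2 hs1)) (sub_nonneg.2 ht1)]

lemma tAux_bounds (N : ℕ) : ∀ n : ℕ, n + 1 ≤ N →
    0 ≤ tAux N n ∧ tAux N n ≤ ((N:ℝ) - n) / 2 := by
  intro n
  induction n with
  | zero =>
      intro _
      have h : tAux N 0 = (N:ℝ)/2 := rfl
      rw [h]
      norm_num
      positivity
  | succ n ih =>
      intro hn
      have hn' : n + 1 ≤ N := by omega
      obtain ⟨h0, h1⟩ := ih hn'
      have hi : (1:ℝ) ≤ (N:ℝ) - 1 - n := by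
        have : (n:ℝ) + 2 ≤ (N:ℝ) := by exact_mod_cast hn
        linarith
      have ht : tAux N n ≤ (((N:ℝ) - 1 - n) + 1) / 2 := by
        have : ((N:ℝ) - 1 - n) + 1 = (N:ℝ) - n := by ring
        rw [this]; exact h1
      obtain ⟨g0, g1⟩ := step_basic ((N:ℝ) - 1 - n) (tAux N n) hi h0 ht
      rw [tAux_succ]
      refine ⟨g0, ?_⟩
      refine g1.trans ?_
      set i : ℝ := (N:ℝ) - 1 - n with hidef
      have hip : (0:ℝ) < i + 1 := by linarith
      rw [div_le_iff₀ hip]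
      have hcast : ((N:ℝ) - (n+1:ℕ)) = i := by push_cast [hidef]; ring
      rw [hcast]
      nlinarith [h0, ht]

lemma tAux_ratio (N n : ℕ) (hn : n + 2 ≤ N) :
    tAux N (n+1) ≤ ((N:ℝ) - 1 - n) * tAux N n / (((N:ℝ) - 1 - n) + 1) := by
  have hn' : n + 1 ≤ N := by omega
  obtain ⟨h0, h1⟩ := tAux_bounds N n hn'
  have hi : (1:ℝ) ≤ (N:ℝ) - 1 - n := by
    have : (n:ℝ) + 2 ≤ (N:ℝ) := by exact_mod_cast hn
    linarith
  have ht : tAux N n ≤ (((N:ℝ) - 1 - n) + 1) / 2 := by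
    have : ((N:ℝ) - 1 - n) + 1 = (N:ℝ) - n := by ring
    rw [this]; exact h1
  rw [tAux_succ]
  exact (step_basic _ _ hi h0 ht).2

lemma base2 (N : ℕ) (hN : 100 ≤ N) : tAux N 2 ≤ (2/5) * ((N:ℝ) - 2) := by
  have hx100 : (100:ℝ) ≤ (N:ℝ) := by exact_mod_cast hN
  set x : ℝ := (N:ℝ) with hx
  have h0 : tAux N 0 = x / 2 := rfl
  have hi1 : (1:ℝ) ≤ x - 1 - ((0:ℕ):ℝ) := by push_cast; linarith
  -- step 1: cubic bound
  have h1le : tAux N 1 ≤ (2 * (x - 1 - ((0:ℕ):ℝ)) ^ 2 * tAux N 0 - (tAux N 0 - 1)^3)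
      / (2 * (x - 1 - ((0:ℕ):ℝ)) * ((x - 1 - ((0:ℕ):ℝ)) + 1)) := by
    rw [tAux_succ]
    exact step_cubic _ _ hi1 (by rw [h0]; linarith) (by rw [h0]; push_cast; linarith)
  rw [h0] at h1le
  push_cast at h1le
  -- bound tAux N 1 by B' = (11/25)(x-1)
  have ht1B : tAux N 1 ≤ (11/25) * (x - 1) := by
    refine h1le.trans ?_
    rw [div_le_iff₀ (by nlinarith)]
    nlinarith [sq_nonneg (x - 100), sq_nonneg ((x-100)*(x-100))]
  obtain ⟨ht10, ht1half⟩ := tAux_bounds N 1 (by omega)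
  have hi2 : (1:ℝ) ≤ x - 1 - ((1:ℕ):ℝ) := by push_cast; linarith
  rcases lt_or_ge (tAux N 1) 1 with hcase | hcase
  · -- t1 < 1 : easy
    have hr := tAux_ratio N 1 (by omega)
    push_cast at hr hi2
    have : (x - 1 - 1) * tAux N 1 / ((x - 1 - 1) + 1) ≤ tAux N 1 := by
      rw [div_le_iff₀ (by linarith)]
      nlinarith
    nlinarith
  · -- t1 ≥ 1 : cubic again
    have ht1h : tAux N 1 ≤ ((x - 1 - ((1:ℕ):ℝ)) + 1) / 2 := by push_cast at ht1half ⊢; linarith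
    have h2le : tAux N 2 ≤ (2 * (x - 1 - ((1:ℕ):ℝ)) ^ 2 * tAux N 1 - (tAux N 1 - 1)^3)
        / (2 * (x - 1 - ((1:ℕ):ℝ)) * ((x - 1 - ((1:ℕ):ℝ)) + 1)) := by
      rw [tAux_succ]
      exact step_cubic _ _ hi2 hcase ht1h
    push_cast at h2le
    refine h2le.trans ?_
    rw [div_le_iff₀ (by nlinarith)]
    have hcube : (0:ℝ) ≤ (x-100)^3 := pow_nonneg (by linarith) 3
    have hbp : 2*(x-2)^2*((11/25)*(x-1)) - ((11/25)*(x-1)-1)^3 ≤ (4/5)*(x-2)^2*(x-1) := by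
      linarith [sq_nonneg (x-100), hcube]
    set t : ℝ := tAux N 1 with htdef
    set B : ℝ := (11/25) * (x - 1) with hB
    have hu : (0:ℝ) ≤ t - 1 := by linarith
    have huB : t - 1 ≤ B - 1 := by linarith [ht1B]
    have hB1 : (0:ℝ) ≤ B - 1 := by linarith
    have hm1 : (t-1)^2 ≤ (B-1)^2 := by
      have h := mul_self_le_mul_self hu huB
      calc (t-1)^2 = (t-1)*(t-1) := sq (t-1) ▸ rfl
        _ ≤ (B-1)*(B-1) := h
        _ = (B-1)^2 := by ring
    have hm2 : (B-1)*(t-1) ≤ (B-1)^2 :=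
      calc (B-1)*(t-1) ≤ (B-1)*(B-1) := mul_le_mul_of_nonneg_left huB hB1
        _ = (B-1)^2 := by ring
    have ha' : 3*(B-1)^2 ≤ 2*(x-2)^2 := by
      rw [hB]; linarith [sq_nonneg (x-100)]
    have hbr : (B-1)^2 + (B-1)*(t-1) + (t-1)^2 ≤ 2 * (x-2)^2 := by linarith
    have hmono : 0 ≤ (B - t) * (2*(x-2)^2 - ((B-1)^2 + (B-1)*(t-1) + (t-1)^2)) :=
      mul_nonneg (by linarith) (by linarith)
    have hid : 2*(x-2)^2*t - (t-1)^3
        = 2*(x-2)^2*B - (B-1)^3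
          - (B - t) * (2*(x-2)^2 - ((B-1)^2 + (B-1)*(t-1) + (t-1)^2)) := by ring
    linarith only [hx100, hmono, hbp, hid]

lemma chain (N : ℕ) (hN : 100 ≤ N) : ∀ n : ℕ, 2 ≤ n → n ≤ N - 1 →
    tAux N n ≤ (2/5) * ((N:ℝ) - n) := by
  intro n h2
  induction n, h2 using Nat.le_induction with
  | base =>
      intro _
      have := base2 N hN
      push_cast
      exact this
  | succ n hn ih =>
      intro hle
      have ihn := ih (by omega)
      have hn2 : n + 2 ≤ N := by omega
      have hr := tAux_ratio N n hn2
      have hi : (1:ℝ) ≤ (N:ℝ) - 1 - n := by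
        have : ((n:ℝ)) + 2 ≤ (N:ℝ) := by exact_mod_cast hn2
        linarith
      obtain ⟨b0, _⟩ := tAux_bounds N n (by omega)
      have key : ((N:ℝ) - 1 - n) * tAux N n / (((N:ℝ) - 1 - n) + 1) ≤ (2/5) * ((N:ℝ) - 1 - n) := by
        rw [div_le_iff₀ (by linarith)]
        nlinarith
      have : ((N:ℝ) - (n+1:ℕ)) = (N:ℝ) - 1 - n := by push_cast; ring
      rw [this]
      exact hr.trans key

/-- Eventually, `0 ≤ t_i^{(N)} ≤ √(2/3)·i` for all `1 ≤ i ≤ N−1`. -/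
theorem threshold_range :
    ∃ N₀ : ℕ, ∀ N : ℕ, N₀ ≤ N → ∀ i : ℕ,
      1 ≤ i → (i : ℝ) ≤ (N : ℝ) - 1 →
      0 ≤ tgame N i ∧ tgame N i ≤ Real.sqrt (2 / 3) * (i : ℝ) := by
  refine ⟨100, fun N hN i hi1 hiN => ?_⟩
  have hiN' : i + 1 ≤ N := by
    have : (i:ℝ) + 1 ≤ (N:ℝ) := by linarith
    exact_mod_cast this
  set n : ℕ := N - 1 - i with hn
  have hni : n + i + 1 = N := by omega
  have hcast : ((N:ℝ) - (n:ℝ)) = (i:ℝ) + 1 := by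
    have : ((n:ℝ)) + (i:ℝ) + 1 = (N:ℝ) := by exact_mod_cast hni
    linarith
  have htg : tgame N i = tAux N n := rfl
  obtain ⟨b0, b1⟩ := tAux_bounds N n (by omega)
  have hsq : (4/5:ℝ) ≤ Real.sqrt (2/3) := by
    rw [show (4/5:ℝ) = Real.sqrt ((4/5)^2) from (Real.sqrt_sq (by norm_num)).symm]
    apply Real.sqrt_le_sqrt; norm_num
  refine ⟨htg ▸ b0, ?_⟩
  rw [htg]
  rcases Nat.lt_or_ge i 2 with h2 | h2
  · -- i = 1
    have hieq : i = 1 := by omega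
    have hch := chain N hN n (by omega) (by omega)
    have : tAux N n ≤ 4/5 := by
      rw [hcast, hieq] at hch; push_cast at hch; linarith
    refine this.trans ?_
    rw [hieq]; push_cast
    linarith [hsq]
  · -- i ≥ 2
    have hi2 : (2:ℝ) ≤ (i:ℝ) := by exact_mod_cast h2
    have : tAux N n ≤ (4/5) * (i:ℝ) := by
      rw [hcast] at b1; linarith
    refine this.trans ?_
    have : (0:ℝ) ≤ (i:ℝ) := by positivity
    nlinarith [hsq]
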